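/- Let A be a real symmetric m×m matrix with A ⪰ λ I_m for some λ > 0, let B ∈ ℝ^m, d ∈ (0,1), and let n be a positive integer. Let Ω_A be a random real symmetric m×m matrix and Ω_B a random vector in ℝ^m (measurable, on a common probability space) such that almost surely ‖Ω_A‖ ≤ d λ (spectral norm), and such that E[‖Ω_A‖_F²] ≤ n m² σ_γ² and E[‖Ω_B‖²] ≤ n m σ_η² for constants σ_γ, σ_η ≥ 0. Define x* = −A^{-1}B and the random vector x(∞) = −(A+Ω_A)^{-1}(B+Ω_B). Then E[ ‖x(∞) − x*‖² ] ≤ ( 2 n m² σ_γ² ‖x*‖² + 2 n m σ_η² ) / ( (1−d)² λ² ). -/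

import Mathlib

/-!
Write `c = (1 - d) λ`. Since `‖Ω_A‖ ≤ d λ`, Cauchy–Schwarz gives `xᵀ(A + Ω_A)x ≥ c ‖x‖²`, and a
second application of Cauchy–Schwarz turns this coercivity into `‖(A + Ω_A) e‖ ≥ c ‖e‖`; in
particular `A + Ω_A` is invertible. The error `e = x(∞) - x*` solves
`(A + Ω_A) e = -(Ω_B + Ω_A x*)`, and `‖Ω_B + Ω_A x*‖² ≤ 2 ‖Ω_A‖_F² ‖x*‖² + 2 ‖Ω_B‖²`.
Hence `‖e‖² ≤ (2 ‖Ω_A‖_F² ‖x*‖² + 2 ‖Ω_B‖²) / c²` pointwise, and integrating this bound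
gives the theorem.
-/

open Matrix Finset MeasureTheory

section Coercive

variable {ι κ : Type*} [Fintype ι]

lemma sum_sq_mulVec_le_frobenius [Fintype κ] (E : Matrix κ ι ℝ) (x : ι → ℝ) :
    ∑ k, (E *ᵥ x) k ^ 2 ≤ (∑ p, ∑ q, E p q ^ 2) * ∑ k, x k ^ 2 := by
  rw [Finset.sum_mul]
  exact Finset.sum_le_sum fun p _ => Finset.sum_mul_sq_le_sq_mul_sq _ (E p) x

lemma sum_sq_add_mulVec_le (E : Matrix ι ι ℝ) (b x : ι → ℝ) :
    ∑ k, (b + E *ᵥ x) k ^ 2 ≤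
      2 * (∑ p, ∑ q, E p q ^ 2) * ∑ k, x k ^ 2 + 2 * ∑ k, b k ^ 2 := by
  calc ∑ k, (b + E *ᵥ x) k ^ 2 ≤ ∑ k, 2 * (b k ^ 2 + (E *ᵥ x) k ^ 2) :=
        Finset.sum_le_sum fun k _ => add_sq_le
    _ = 2 * ∑ k, b k ^ 2 + 2 * ∑ k, (E *ᵥ x) k ^ 2 := by
        rw [← Finset.mul_sum, Finset.sum_add_distrib, mul_add]
    _ ≤ _ := by linarith [sum_sq_mulVec_le_frobenius E x]

lemma coercive_add_of_mulVec_le {A E : Matrix ι ι ℝ} {lam d : ℝ}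
    (hA : ∀ x : ι → ℝ, lam * ∑ k, x k ^ 2 ≤ x ⬝ᵥ A *ᵥ x)
    (hE : ∀ x : ι → ℝ, √(∑ k, (E *ᵥ x) k ^ 2) ≤ d * lam * √(∑ k, x k ^ 2))
    (x : ι → ℝ) :
    (1 - d) * lam * ∑ k, x k ^ 2 ≤ x ⬝ᵥ (A + E) *ᵥ x := by
  have hEx : -(x ⬝ᵥ E *ᵥ x) ≤ d * lam * ∑ k, x k ^ 2 := calc
    -(x ⬝ᵥ E *ᵥ x) = ∑ k, -x k * (E *ᵥ x) k := by simp [dotProduct]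
    _ ≤ √(∑ k, (-x k) ^ 2) * √(∑ k, (E *ᵥ x) k ^ 2) := Real.sum_mul_le_sqrt_mul_sqrt _ _ _
    _ ≤ √(∑ k, x k ^ 2) * (d * lam * √(∑ k, x k ^ 2)) := by
        simp only [neg_sq]
        gcongr
        exact hE x
    _ = d * lam * ∑ k, x k ^ 2 := by
        rw [mul_left_comm, Real.mul_self_sqrt (by positivity)]
  rw [add_mulVec, dotProduct_add]
  linarith [hA x]

lemma sq_mul_sum_sq_le_of_coercive {M : Matrix ι ι ℝ} {c : ℝ} (hc : 0 < c)
    (hM : ∀ x : ι → ℝ, c * ∑ k, x k ^ 2 ≤ x ⬝ᵥ M *ᵥ x) (x : ι → ℝ) :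
    c ^ 2 * ∑ k, x k ^ 2 ≤ ∑ k, (M *ᵥ x) k ^ 2 := by
  set S := ∑ k, x k ^ 2
  set T := ∑ k, (M *ᵥ x) k ^ 2
  have hS : 0 ≤ S := by positivity
  have hCS : c * S ≤ √S * √T := (hM x).trans (Real.sum_mul_le_sqrt_mul_sqrt _ _ _)
  have hsq : (c * S) ^ 2 ≤ S * T := by
    calc (c * S) ^ 2 ≤ (√S * √T) ^ 2 := pow_le_pow_left₀ (by positivity) hCS 2
      _ = S * T := by rw [mul_pow, Real.sq_sqrt hS, Real.sq_sqrt (by positivity)]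
  rcases hS.eq_or_lt with hS0 | hSpos
  · rw [← hS0, mul_zero]
    positivity
  · nlinarith

lemma isUnit_of_coercive [DecidableEq ι] {M : Matrix ι ι ℝ} {c : ℝ} (hc : 0 < c)
    (hM : ∀ x : ι → ℝ, c * ∑ k, x k ^ 2 ≤ x ⬝ᵥ M *ᵥ x) : IsUnit M := by
  refine mulVec_injective_iff_isUnit.mp fun x y hxy => ?_
  have h := sq_mul_sum_sq_le_of_coercive hc hM (x - y)
  rw [mulVec_sub, hxy, sub_self] at h
  have hS : ∑ k, (x - y) k ^ 2 = 0 :=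
    le_antisymm (nonpos_of_mul_nonpos_right (by simpa using h) (by positivity)) (by positivity)
  rw [Finset.sum_eq_zero_iff_of_nonneg fun k _ => sq_nonneg _] at hS
  funext k
  simpa [sub_eq_zero] using hS k (Finset.mem_univ k)

lemma mulVec_neg_inv_mulVec {R : Type*} [DecidableEq ι] [CommRing R]
    {A : Matrix ι ι R} (hA : IsUnit A) (B : ι → R) : A *ᵥ -(A⁻¹ *ᵥ B) = -B := by
  rw [mulVec_neg, mulVec_mulVec, mul_nonsing_inv _ ((isUnit_iff_isUnit_det A).mp hA),
    one_mulVec]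

theorem sum_sq_perturbed_solution_sub_le [DecidableEq ι] {A E : Matrix ι ι ℝ} {lam d : ℝ}
    (hlam : 0 < lam) (hd : d < 1)
    (hA : ∀ x : ι → ℝ, lam * ∑ k, x k ^ 2 ≤ x ⬝ᵥ A *ᵥ x)
    (hE : ∀ x : ι → ℝ, √(∑ k, (E *ᵥ x) k ^ 2) ≤ d * lam * √(∑ k, x k ^ 2))
    (B b : ι → ℝ) :
    ∑ k, ((-((A + E)⁻¹ *ᵥ (B + b))) k - (-(A⁻¹ *ᵥ B)) k) ^ 2 ≤
      (2 * (∑ p, ∑ q, E p q ^ 2) * ∑ k, (-(A⁻¹ *ᵥ B)) k ^ 2 + 2 * ∑ k, b k ^ 2) /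
        ((1 - d) ^ 2 * lam ^ 2) := by
  set xstar := -(A⁻¹ *ᵥ B)
  set xinf := -((A + E)⁻¹ *ᵥ (B + b))
  have hc : 0 < (1 - d) * lam := mul_pos (by linarith) hlam
  have hAE := coercive_add_of_mulVec_le hA hE
  have herr : (A + E) *ᵥ (xinf - xstar) = -(b + E *ᵥ xstar) := by
    rw [mulVec_sub, mulVec_neg_inv_mulVec (isUnit_of_coercive hc hAE), add_mulVec,
      mulVec_neg_inv_mulVec (isUnit_of_coercive hlam hA)]
    abel
  have hbound := sq_mul_sum_sq_le_of_coercive hc hAE (xinf - xstar)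
  rw [herr] at hbound
  simp only [Pi.neg_apply, neg_sq, Pi.sub_apply] at hbound
  rw [le_div_iff₀ (by positivity)]
  nlinarith [sum_sq_add_mulVec_le E b xstar]

end Coercive

lemma lintegral_ofReal_le_of_ae_le {α : Type*} [MeasurableSpace α] {μ : Measure α}
    {f F G : α → ℝ} {a b : ℝ} (ha : 0 ≤ a) (hb : 0 ≤ b) (hG : AEMeasurable G μ)
    (h : ∀ᵐ x ∂μ, f x ≤ a * F x + b * G x) :
    ∫⁻ x, ENNReal.ofReal (f x) ∂μ ≤
      ENNReal.ofReal a * ∫⁻ x, ENNReal.ofReal (F x) ∂μ +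
        ENNReal.ofReal b * ∫⁻ x, ENNReal.ofReal (G x) ∂μ := by
  calc ∫⁻ x, ENNReal.ofReal (f x) ∂μ
      ≤ ∫⁻ x, ENNReal.ofReal a * ENNReal.ofReal (F x) +
          ENNReal.ofReal b * ENNReal.ofReal (G x) ∂μ := by
        refine lintegral_mono_ae (h.mono fun x hx => ?_)
        rw [← ENNReal.ofReal_mul ha, ← ENNReal.ofReal_mul hb]
        exact (ENNReal.ofReal_le_ofReal hx).trans ENNReal.ofReal_add_le
    _ = _ := by
        rw [lintegral_add_right' _ (hG.ennreal_ofReal.const_mul _),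
          lintegral_const_mul' _ _ ENNReal.ofReal_ne_top,
          lintegral_const_mul' _ _ ENNReal.ofReal_ne_top]

theorem stmt4 (m n : ℕ)
    (A : Matrix (Fin m) (Fin m) ℝ) (B : Fin m → ℝ)
    (lam d : ℝ) (hlam : 0 < lam) (hd : d ∈ Set.Ioo (0 : ℝ) 1)
    (hApd : ∀ x : Fin m → ℝ, lam * ∑ k, (x k) ^ 2 ≤ x ⬝ᵥ A.mulVec x)
    {Ω : Type*} [MeasurableSpace Ω] (P : Measure Ω)
    (ΩA : Ω → Matrix (Fin m) (Fin m) ℝ) (ΩB : Ω → Fin m → ℝ)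
    (hΩBmeas : Measurable ΩB)
    (hΩAnorm : ∀ᵐ ω ∂P, ∀ x : Fin m → ℝ,
      Real.sqrt (∑ k, ((ΩA ω).mulVec x k) ^ 2) ≤ d * lam * Real.sqrt (∑ k, (x k) ^ 2))
    (σγ ση : ℝ)
    (hEA : ∫⁻ ω, ENNReal.ofReal (∑ p, ∑ q, (ΩA ω p q) ^ 2) ∂P
      ≤ ENNReal.ofReal ((n : ℝ) * (m : ℝ) ^ 2 * σγ ^ 2))
    (hEB : ∫⁻ ω, ENNReal.ofReal (∑ k, (ΩB ω k) ^ 2) ∂P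
      ≤ ENNReal.ofReal ((n : ℝ) * (m : ℝ) * ση ^ 2)) :
    let xstar : Fin m → ℝ := -(A⁻¹.mulVec B)
    let xinf : Ω → Fin m → ℝ := fun ω => -((A + ΩA ω)⁻¹.mulVec (B + ΩB ω))
    ∫⁻ ω, ENNReal.ofReal (∑ k, (xinf ω k - xstar k) ^ 2) ∂P
      ≤ ENNReal.ofReal
          ((2 * (n : ℝ) * (m : ℝ) ^ 2 * σγ ^ 2 * (∑ k, (xstar k) ^ 2)
              + 2 * (n : ℝ) * (m : ℝ) * ση ^ 2) / ((1 - d) ^ 2 * lam ^ 2)) := by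
  intro xstar xinf
  set Sx := ∑ k, xstar k ^ 2
  set c := (1 - d) ^ 2 * lam ^ 2
  have hc : 0 < c := by have := sub_pos.mpr hd.2; positivity
  have hpointwise : ∀ᵐ ω ∂P, ∑ k, (xinf ω k - xstar k) ^ 2 ≤
      2 * Sx / c * ∑ p, ∑ q, ΩA ω p q ^ 2 + 2 / c * ∑ k, ΩB ω k ^ 2 := by
    filter_upwards [hΩAnorm] with ω hω
    refine (sum_sq_perturbed_solution_sub_le hlam hd.2 hApd hω B (ΩB ω)).trans_eq ?_
    ring
  have hGmeas : AEMeasurable (fun ω => ∑ k, ΩB ω k ^ 2) P := by fun_prop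
  calc _ ≤ ENNReal.ofReal (2 * Sx / c) * ∫⁻ ω, ENNReal.ofReal (∑ p, ∑ q, ΩA ω p q ^ 2) ∂P +
        ENNReal.ofReal (2 / c) * ∫⁻ ω, ENNReal.ofReal (∑ k, ΩB ω k ^ 2) ∂P :=
        lintegral_ofReal_le_of_ae_le (by positivity) (by positivity) hGmeas hpointwise
    _ ≤ ENNReal.ofReal (2 * Sx / c) * ENNReal.ofReal (n * m ^ 2 * σγ ^ 2) +
        ENNReal.ofReal (2 / c) * ENNReal.ofReal (n * m * ση ^ 2) := by gcongr
    _ = _ := by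
        rw [← ENNReal.ofReal_mul (by positivity), ← ENNReal.ofReal_mul (by positivity),
          ← ENNReal.ofReal_add (by positivity) (by positivity)]
        congr 1
        ring
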